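/- Let m ≥ 1, E = 2m (compact case, no external edges), Q an orthogonal projection on ℂ^E, 𝔖_Q := Q^⊥ − Q, M_sy := {(c,c) : c ∈ ℂ^m}, M_asy := {(c,−c) : c ∈ ℂ^m}. Then tr 𝔖_Q = 2[dim(ker Q ∩ M_sy) − dim((ker Q)^⊥ ∩ M_asy)] = 2[dim(ker Q ∩ M_asy) − dim((ker Q)^⊥ ∩ M_sy)]. -/

import Mathlib

/-!
Let `K = ker Q`. Since `Q` is self-adjoint, `range Q = Kᗮ`; and `M_asy = M_syᗮ`. For `M` one of
`M_sy`, `M_asy` we therefore have `range Q ∩ Mᗮ = (K + M)ᗮ`, and Grassmann's formula gives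
`dim (K ∩ M) - dim (range Q ∩ Mᗮ) = dim K + dim M - 2m = dim K - m`.
Since `Q` is idempotent, `tr Q = rank Q = 2m - dim K`, so `tr (1 - 2Q) = 2 (dim K - m)` as well.
-/

open Matrix

/-- The linear embedding c ↦ (c,c). -/
def symMap (m : ℕ) : (Fin m → ℂ) →ₗ[ℂ] (Fin m ⊕ Fin m → ℂ) where
  toFun c := Sum.elim c c
  map_add' x y := by funext i; cases i <;> simp
  map_smul' r x := by funext i; cases i <;> simp

/-- The linear embedding c ↦ (c,−c). -/
def asymMap (m : ℕ) : (Fin m → ℂ) →ₗ[ℂ] (Fin m ⊕ Fin m → ℂ) where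
  toFun c := Sum.elim c (-c)
  map_add' x y := by funext i; cases i <;> simp [add_comm]
  map_smul' r x := by funext i; cases i <;> simp

/-- The symmetric subspace M_sy = {(c,c)}. -/
noncomputable def Msy (m : ℕ) : Submodule ℂ (Fin m ⊕ Fin m → ℂ) := LinearMap.range (symMap m)

/-- The antisymmetric subspace M_asy = {(c,−c)}. -/
noncomputable def Masy (m : ℕ) : Submodule ℂ (Fin m ⊕ Fin m → ℂ) := LinearMap.range (asymMap m)

open Module Submodule LinearMap

section InnerProductSpace

variable {𝕜 E : Type*} [RCLike 𝕜] [NormedAddCommGroup E] [InnerProductSpace 𝕜 E]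
  [FiniteDimensional 𝕜 E]

theorem Submodule.finrank_inf_sub_finrank_orthogonal_inf (K M : Submodule 𝕜 E) :
    (finrank 𝕜 ↥(K ⊓ M) : ℤ) - finrank 𝕜 ↥(Kᗮ ⊓ Mᗮ) =
      finrank 𝕜 K + finrank 𝕜 M - finrank 𝕜 E := by
  have hsup := finrank_sup_add_finrank_inf_eq K M
  have horth := (K ⊔ M).finrank_add_finrank_orthogonal
  rw [inf_orthogonal]
  omega

theorem LinearMap.IsSymmetric.finrank_ker_inf_sub_finrank_range_inf {T : E →ₗ[𝕜] E}
    (hT : T.IsSymmetric) (M : Submodule 𝕜 E) :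
    (finrank 𝕜 ↥(ker T ⊓ M) : ℤ) - finrank 𝕜 ↥(range T ⊓ Mᗮ) =
      finrank 𝕜 (ker T) + finrank 𝕜 M - finrank 𝕜 E := by
  rw [← (ker T).finrank_inf_sub_finrank_orthogonal_inf, ← hT.orthogonal_range,
    orthogonal_orthogonal]

end InnerProductSpace

section MatrixTrace

variable {ι 𝕜 : Type*} [Fintype ι] [DecidableEq ι] [Field 𝕜]

theorem Matrix.trace_eq_finrank_range_mulVecLin {Q : Matrix ι ι 𝕜} (hQ : IsIdempotentElem Q) :
    Q.trace = finrank 𝕜 (range Q.mulVecLin) := by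
  rw [← trace_toLin'_eq]
  exact (hQ.map toLinAlgEquiv').isProj_range.trace

theorem Matrix.trace_one_sub_two_smul_eq_finrank_ker_sub_finrank_range {Q : Matrix ι ι 𝕜}
    (hQ : IsIdempotentElem Q) :
    (1 - (2 : 𝕜) • Q).trace = finrank 𝕜 (ker Q.mulVecLin) - finrank 𝕜 (range Q.mulVecLin) := by
  have hrank := congrArg (Nat.cast : ℕ → 𝕜) Q.mulVecLin.finrank_range_add_finrank_ker
  rw [finrank_fintype_fun_eq_card] at hrank
  push_cast at hrank
  rw [trace_sub, trace_smul, trace_one, trace_eq_finrank_range_mulVecLin hQ, smul_eq_mul]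
  linear_combination -hrank

end MatrixTrace

section Euclidean

variable {ι 𝕜 : Type*} [RCLike 𝕜]

/-- `ι → 𝕜` carries the sup norm; orthogonality of its subspaces is meant for the standard inner
product, i.e. after transport to `EuclideanSpace 𝕜 ι`. -/
def Submodule.toEuclidean (N : Submodule 𝕜 (ι → 𝕜)) : Submodule 𝕜 (EuclideanSpace 𝕜 ι) :=
  N.comap (WithLp.linearEquiv 2 𝕜 (ι → 𝕜)).toLinearMap

theorem Submodule.mem_toEuclidean {N : Submodule 𝕜 (ι → 𝕜)} {x : EuclideanSpace 𝕜 ι} :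
    x ∈ N.toEuclidean ↔ x.ofLp ∈ N :=
  Iff.rfl

theorem Submodule.finrank_toEuclidean (N : Submodule 𝕜 (ι → 𝕜)) :
    finrank 𝕜 N.toEuclidean = finrank 𝕜 N := by
  rw [toEuclidean, comap_equiv_eq_map_symm, LinearEquiv.finrank_map_eq]

theorem Submodule.toEuclidean_inf (N N' : Submodule 𝕜 (ι → 𝕜)) :
    (N ⊓ N').toEuclidean = N.toEuclidean ⊓ N'.toEuclidean :=
  comap_inf _ _ _

variable [Fintype ι] [DecidableEq ι]

theorem Matrix.ker_toEuclideanLin (Q : Matrix ι ι 𝕜) :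
    ker (toEuclideanLin Q) = (ker Q.mulVecLin).toEuclidean := by
  ext x
  simp [mem_toEuclidean, toLpLin_apply, WithLp.toLp_eq_zero]

theorem Matrix.range_toEuclideanLin (Q : Matrix ι ι 𝕜) :
    range (toEuclideanLin Q) = (range Q.mulVecLin).toEuclidean := by
  ext x
  simp only [mem_toEuclidean, mem_range, toLpLin_apply]
  exact ⟨fun ⟨y, hy⟩ => ⟨y.ofLp, by rw [← hy]; rfl⟩,
    fun ⟨y, hy⟩ => ⟨WithLp.toLp 2 y, congrArg (WithLp.toLp 2) hy⟩⟩

theorem Matrix.IsHermitian.finrank_ker_inf_sub_finrank_range_inf {Q : Matrix ι ι 𝕜}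
    (hQ : Q.IsHermitian) {M N : Submodule 𝕜 (ι → 𝕜)} (hMN : M.toEuclideanᗮ = N.toEuclidean) :
    (finrank 𝕜 ↥(ker Q.mulVecLin ⊓ M) : ℤ) - finrank 𝕜 ↥(range Q.mulVecLin ⊓ N) =
      finrank 𝕜 (ker Q.mulVecLin) + finrank 𝕜 M - Fintype.card ι := by
  have h := (isSymmetric_toEuclideanLin_iff.mpr hQ).finrank_ker_inf_sub_finrank_range_inf
    M.toEuclidean
  rwa [hMN, ker_toEuclideanLin, range_toEuclideanLin, ← toEuclidean_inf, ← toEuclidean_inf,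
    finrank_toEuclidean, finrank_toEuclidean, finrank_toEuclidean, finrank_toEuclidean,
    finrank_euclideanSpace] at h

end Euclidean

section SymmetricSubspaces

variable {m : ℕ}

theorem finrank_Msy : finrank ℂ (Msy m) = m := by
  rw [Msy, finrank_range_of_inj, finrank_fin_fun]
  exact fun c d h => funext fun i => congrFun h (Sum.inl i)

theorem finrank_Masy : finrank ℂ (Masy m) = m := by
  rw [Masy, finrank_range_of_inj, finrank_fin_fun]
  exact fun c d h => funext fun i => congrFun h (Sum.inl i)

theorem toEuclidean_Masy_le_orthogonal : (Masy m).toEuclidean ≤ (Msy m).toEuclideanᗮ := by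
  rintro x ⟨d, hd⟩
  rw [mem_orthogonal]
  rintro u ⟨c, hc⟩
  change asymMap m d = x.ofLp at hd
  change symMap m c = u.ofLp at hc
  rw [EuclideanSpace.inner_eq_star_dotProduct, ← hd, ← hc]
  simp [dotProduct, symMap, asymMap, Fintype.sum_sum_type]

theorem orthogonal_toEuclidean_Msy : (Msy m).toEuclideanᗮ = (Masy m).toEuclidean := by
  refine (eq_of_le_of_finrank_eq toEuclidean_Masy_le_orthogonal ?_).symm
  have h := (Msy m).toEuclidean.finrank_add_finrank_orthogonal
  rw [finrank_toEuclidean, finrank_Msy, finrank_euclideanSpace, Fintype.card_sum,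
    Fintype.card_fin] at h
  rw [finrank_toEuclidean, finrank_Masy]
  omega

theorem orthogonal_toEuclidean_Masy : (Masy m).toEuclideanᗮ = (Msy m).toEuclidean := by
  rw [← orthogonal_toEuclidean_Msy, orthogonal_orthogonal]

end SymmetricSubspaces

theorem stmt5 {m : ℕ} (Q : Matrix (Fin m ⊕ Fin m) (Fin m ⊕ Fin m) ℂ)
    (hQ : Qᴴ = Q) (hQ2 : Q * Q = Q) :
    Matrix.trace ((1 : Matrix (Fin m ⊕ Fin m) (Fin m ⊕ Fin m) ℂ) - (2 : ℂ) • Q) =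
      2 * ((Module.finrank ℂ ↥(LinearMap.ker Q.mulVecLin ⊓ Msy m) : ℂ) -
           (Module.finrank ℂ ↥(LinearMap.range Q.mulVecLin ⊓ Masy m) : ℂ)) ∧
    Matrix.trace ((1 : Matrix (Fin m ⊕ Fin m) (Fin m ⊕ Fin m) ℂ) - (2 : ℂ) • Q) =
      2 * ((Module.finrank ℂ ↥(LinearMap.ker Q.mulVecLin ⊓ Masy m) : ℂ) -
           (Module.finrank ℂ ↥(LinearMap.range Q.mulVecLin ⊓ Msy m) : ℂ)) := by
  have hrank := congrArg (Nat.cast : ℕ → ℂ) Q.mulVecLin.finrank_range_add_finrank_ker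
  rw [finrank_fintype_fun_eq_card, Fintype.card_sum, Fintype.card_fin] at hrank
  push_cast at hrank
  have key {M N : Submodule ℂ (Fin m ⊕ Fin m → ℂ)} (hMN : M.toEuclideanᗮ = N.toEuclidean)
      (hM : finrank ℂ M = m) :
      (1 - (2 : ℂ) • Q).trace =
        2 * ((finrank ℂ ↥(ker Q.mulVecLin ⊓ M) : ℂ) - finrank ℂ ↥(range Q.mulVecLin ⊓ N)) := by
    have h := congrArg (Int.cast : ℤ → ℂ)
      (IsHermitian.finrank_ker_inf_sub_finrank_range_inf hQ hMN)
    rw [hM, Fintype.card_sum, Fintype.card_fin] at h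
    push_cast at h
    rw [trace_one_sub_two_smul_eq_finrank_ker_sub_finrank_range hQ2]
    linear_combination -2 * h - hrank
  exact ⟨key orthogonal_toEuclidean_Msy finrank_Msy, key orthogonal_toEuclidean_Masy finrank_Masy⟩
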